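/- Let H ∈ ℤ[X] be a monic polynomial and let p be a prime not dividing the discriminant of H. Suppose the reduction of H modulo p factors in F_p[X] with both a linear factor and an irreducible factor of degree d ≥ 3. If H is a Hilbert class polynomial, this yields a contradiction; i.e., for any Hilbert class polynomial H_D and any prime p modulo which H_D is squarefree, either all irreducible factors of H_D mod p have the same degree, or the factors have degrees only 1 and 2. -/
import Mathlib


lemma iter_mul (A : Type*) [CommGroup A] (σ : Equiv.Perm A) (g : A)
    (h : ∀ a : A, σ a = g * a) (n : ℕ) (a : A) : σ^[n] a = g ^ n * a := by
  induction n with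
  | zero => simp
  | succ n ih => rw [Function.iterate_succ_apply', ih, h, ← mul_assoc, ← pow_succ']

/-- For a Hilbert class polynomial `H_D` and a prime `p` modulo which `H_D` is
squarefree, either all irreducible factors of `H_D mod p` have the same degree, or the
factors have degrees only 1 and 2.  Following the context, the degrees of the irreducible
factors are the cycle lengths of the Frobenius permutation `σ` of the set of roots, which is
identified with the class group `A = C_D`; `σ` is either a translation `a ↦ g·a` (split
case, all orbits of size `orderOf g`) or of the form `a ↦ b·a⁻¹` (inert case, orbits of size
1 or 2).  The conclusion is the combinatorial consequence for the cycle lengths (i.e. the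
factor degrees): either all equal, or all in `{1, 2}`. -/
theorem stmt_19 (A : Type*) [CommGroup A] [Finite A] (σ : Equiv.Perm A)
    (hσ : (∃ g : A, ∀ a : A, σ a = g * a) ∨ (∃ b : A, ∀ a : A, σ a = b * a⁻¹)) :
    (∃ n : ℕ, ∀ a : A, Function.minimalPeriod σ a = n) ∨
    (∀ a : A, Function.minimalPeriod σ a = 1 ∨ Function.minimalPeriod σ a = 2) := by
  rcases hσ with ⟨g, hg⟩ | ⟨b, hb⟩
  · left
    refine ⟨orderOf g, fun a => ?_⟩
    have hper : Function.IsPeriodicPt σ (orderOf g) a := by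
      show σ^[orderOf g] a = a
      rw [iter_mul A σ g hg, pow_orderOf_eq_one, one_mul]
    have hpos : 0 < orderOf g := orderOf_pos g
    have h1 : Function.minimalPeriod σ a ∣ orderOf g := hper.minimalPeriod_dvd
    have hmp : 0 < Function.minimalPeriod σ a := hper.minimalPeriod_pos hpos
    have h2 : orderOf g ∣ Function.minimalPeriod σ a := by
      apply orderOf_dvd_of_pow_eq_one
      have := Function.isPeriodicPt_minimalPeriod σ a
      rw [Function.IsPeriodicPt, Function.IsFixedPt,
        iter_mul A σ g hg] at this
      exact mul_right_cancel (by rwa [one_mul])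
    exact Nat.dvd_antisymm h1 h2
  · right
    intro a
    have hper : Function.IsPeriodicPt σ 2 a := by
      show σ^[2] a = a
      simp [Function.iterate_succ_apply', hb, mul_inv_rev, mul_comm, mul_assoc]
    have h1 : Function.minimalPeriod σ a ∣ 2 := hper.minimalPeriod_dvd
    have hmp : 0 < Function.minimalPeriod σ a := hper.minimalPeriod_pos (by norm_num)
    rcases (Nat.le_of_dvd (by norm_num) h1).lt_or_eq with h | h
    · left; omega
    · right; exact h
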